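/- arXiv:math/0511486 — 3 statements merged into one kernel-verified Lean document; each statement's English description precedes it below -/
import Mathlib

section
/- Let n ≥ 2, let f be a nonzero formal power series in ℂ[[x₁,…,xₙ]], and let w = (0, w₂, …, wₙ) ∈ ℝⁿ with wᵢ > 0 for all i ≠ 1. Then the minimum of w·α over α ∈ Supp(f) is attained at two or more distinct elements of Supp(f) if and only if the minimum of w·β over β ∈ E₁(f) is attained at two or more distinct elements of E₁(f). -/
/-- The support of a multivariate formal power series. -/
def Supp {n : ℕ} (f : MvPowerSeries (Fin n) ℂ) : Set (Fin n →₀ ℕ) :=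
  {α | MvPowerSeries.coeff α f ≠ 0}

/-- The `w`-weight of an exponent vector `α`, namely `w·α = Σᵢ wᵢ αᵢ`. -/
def wt {n : ℕ} (w : Fin n → ℝ) (α : Fin n →₀ ℕ) : ℝ :=
  ∑ i, w i * (α i : ℝ)

/-- The projection `π : ℕⁿ → ℕⁿ⁻¹` forgetting the first coordinate (realized as the
restriction to the indices `i ≠ 0`). -/
def proj1 {n : ℕ} (α : Fin (n + 2) →₀ ℕ) : {i : Fin (n + 2) // i ≠ 0} → ℕ :=
  fun i => α i.1

/-- `E₁(f) = {α ∈ Supp f : π(α) is a minimal element of π(Supp f)}`, with respect to the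
componentwise partial order. -/
def E1 {n : ℕ} (f : MvPowerSeries (Fin (n + 2)) ℂ) : Set (Fin (n + 2) →₀ ℕ) :=
  {α ∈ Supp f | ∀ β ∈ Supp f, proj1 β ≤ proj1 α → proj1 β = proj1 α}

/-- The minimum of `w·α` over `α ∈ S` is attained at two or more distinct elements of `S`. -/
def MinAttainedTwice {n : ℕ} (w : Fin n → ℝ) (S : Set (Fin n →₀ ℕ)) : Prop :=
  ∃ a ∈ S, ∃ b ∈ S, a ≠ b ∧ wt w a = wt w b ∧ ∀ c ∈ S, wt w a ≤ wt w c

/-! Since `w₁ = 0` and the other weights are positive, `w·α` depends only on `π(α)` and is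
strictly monotone in it. Hence every minimizer of the weight on `Supp f` has a minimal
projection, i.e. lies in `E₁(f)`; conversely, by well-foundedness of `ℕⁿ⁻¹`, every point of
`Supp f` lies above a point of `E₁(f)`, which has no larger weight. So both sets have the same
minimum and the same minimizers. -/

lemma minAttainedTwice_iff_of_subset {m : ℕ} {w : Fin m → ℝ} {S T : Set (Fin m →₀ ℕ)}
    (hTS : T ⊆ S) (hmin : ∀ a ∈ S, (∀ c ∈ S, wt w a ≤ wt w c) → a ∈ T)
    (hdom : ∀ c ∈ S, ∃ d ∈ T, wt w d ≤ wt w c) :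
    MinAttainedTwice w S ↔ MinAttainedTwice w T := by
  constructor
  · rintro ⟨a, ha, b, hb, hab, heq, hle⟩
    exact ⟨a, hmin a ha hle, b, hmin b hb (heq ▸ hle), hab, heq, fun c hc => hle c (hTS hc)⟩
  · rintro ⟨a, ha, b, hb, hab, heq, hle⟩
    refine ⟨a, hTS ha, b, hTS hb, hab, heq, fun c hc => ?_⟩
    obtain ⟨d, hd, hdc⟩ := hdom c hc
    exact (hle d hd).trans hdc

section

variable {n : ℕ} {w : Fin (n + 2) → ℝ}

lemma wt_eq_sum_proj1 (hw0 : w 0 = 0) (α : Fin (n + 2) →₀ ℕ) :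
    wt w α = ∑ i : {i : Fin (n + 2) // i ≠ 0}, w i * (proj1 α i : ℝ) := by
  rw [wt, Fintype.sum_eq_add_sum_subtype_ne _ 0, hw0, zero_mul, zero_add]
  rfl

lemma wt_le_wt_of_proj1_le (hw0 : w 0 = 0) (hw : ∀ i, i ≠ 0 → 0 ≤ w i)
    {α β : Fin (n + 2) →₀ ℕ} (h : proj1 β ≤ proj1 α) : wt w β ≤ wt w α := by
  rw [wt_eq_sum_proj1 hw0, wt_eq_sum_proj1 hw0]
  exact Finset.sum_le_sum fun i _ =>
    mul_le_mul_of_nonneg_left (by exact_mod_cast h i) (hw i i.2)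

lemma wt_lt_wt_of_proj1_lt (hw0 : w 0 = 0) (hw : ∀ i, i ≠ 0 → 0 < w i)
    {α β : Fin (n + 2) →₀ ℕ} (h : proj1 β < proj1 α) : wt w β < wt w α := by
  obtain ⟨hle, j, hj⟩ := Pi.lt_def.1 h
  rw [wt_eq_sum_proj1 hw0, wt_eq_sum_proj1 hw0]
  exact Finset.sum_lt_sum
    (fun i _ => mul_le_mul_of_nonneg_left (by exact_mod_cast hle i) (hw i i.2).le)
    ⟨j, Finset.mem_univ _, mul_lt_mul_of_pos_left (by exact_mod_cast hj) (hw j j.2)⟩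

variable {f : MvPowerSeries (Fin (n + 2)) ℂ}

lemma E1_subset_supp : E1 f ⊆ Supp f := fun _ h => h.1

lemma mem_E1_of_forall_wt_le (hw0 : w 0 = 0) (hw : ∀ i, i ≠ 0 → 0 < w i)
    {a : Fin (n + 2) →₀ ℕ} (ha : a ∈ Supp f) (hmin : ∀ c ∈ Supp f, wt w a ≤ wt w c) :
    a ∈ E1 f := by
  refine ⟨ha, fun β hβ hle => ?_⟩
  by_contra hne
  exact (wt_lt_wt_of_proj1_lt hw0 hw (lt_of_le_of_ne hle hne)).not_ge (hmin β hβ)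

lemma exists_mem_E1_proj1_le {c : Fin (n + 2) →₀ ℕ} (hc : c ∈ Supp f) :
    ∃ d ∈ E1 f, proj1 d ≤ proj1 c := by
  obtain ⟨_, hle, ⟨d, hd, rfl⟩, hmin⟩ :=
    exists_minimal_le_of_wellFoundedLT (· ∈ proj1 '' Supp f) (proj1 c) ⟨c, hc, rfl⟩
  exact ⟨d, ⟨hd, fun β hβ hβd => le_antisymm hβd (hmin ⟨β, hβ, rfl⟩ hβd)⟩, hle⟩

end

theorem minAttainedTwice_supp_iff_E1_general
    (n : ℕ) (f : MvPowerSeries (Fin (n + 2)) ℂ)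
    (w : Fin (n + 2) → ℝ) (hw0 : w 0 = 0) (hw : ∀ i : Fin (n + 2), i ≠ 0 → 0 < w i) :
    MinAttainedTwice w (Supp f) ↔ MinAttainedTwice w (E1 f) := by
  refine minAttainedTwice_iff_of_subset E1_subset_supp
    (fun a ha hmin => mem_E1_of_forall_wt_le hw0 hw ha hmin) fun c hc => ?_
  obtain ⟨d, hd, hdc⟩ := exists_mem_E1_proj1_le hc
  exact ⟨d, hd, wt_le_wt_of_proj1_le hw0 (fun i hi => (hw i hi).le) hdc⟩

/-- For `n ≥ 2`, a nonzero `f ∈ ℂ[[x₁,…,xₙ]]` and `w = (0, w₂, …, wₙ)` with `wᵢ > 0` for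
`i ≠ 1`: the minimum of `w·α` over `Supp f` is attained at two or more distinct elements
of `Supp f` iff the minimum of `w·β` over `E₁(f)` is attained at two or more distinct
elements of `E₁(f)`. -/
theorem minAttainedTwice_supp_iff_E1
    (n : ℕ) (f : MvPowerSeries (Fin (n + 2)) ℂ) (hf : f ≠ 0)
    (w : Fin (n + 2) → ℝ) (hw0 : w 0 = 0) (hw : ∀ i : Fin (n + 2), i ≠ 0 → 0 < w i) :
    MinAttainedTwice w (Supp f) ↔ MinAttainedTwice w (E1 f) :=
  minAttainedTwice_supp_iff_E1_general n f w hw0 hw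
end

section
/- Let n ≥ 2, let f be a nonzero formal power series in ℂ[[x₁,…,xₙ]], and let A ⊆ E₁(f) be a subset such that for every β ∈ π(E₁(f)), writing F_β = E₁(f) ∩ π⁻¹(β) for the fiber over β: A ∩ F_β is nonempty, and if F_β has at least two elements then A ∩ F_β has at least two elements. Then for every w = (0, w₂, …, wₙ) ∈ ℝⁿ with wᵢ > 0 for all i ≠ 1, the minimum of w·α over α ∈ E₁(f) is attained at two or more distinct elements of E₁(f) if and only if the minimum of w·α over α ∈ A is attained at two or more distinct elements of A. -/
/-- The fiber of `E₁(f)` over `β ∈ π(E₁(f))`. -/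
def fiber1 {n : ℕ} (f : MvPowerSeries (Fin (n + 2)) ℂ)
    (β : {i : Fin (n + 2) // i ≠ 0} → ℕ) : Set (Fin (n + 2) →₀ ℕ) :=
  {α ∈ E1 f | proj1 α = β}

section Fibers

variable {X ι : Type*} {p : X → ι} {S A : Set X}

theorem exists_mem_fiber_of_forall_fiber_nonempty
    (hne : ∀ y ∈ p '' S, (A ∩ (S ∩ p ⁻¹' {y})).Nonempty) {a : X} (ha : a ∈ S) :
    ∃ a' ∈ A, p a' = p a := by
  obtain ⟨a', ha'A, -, ha'p⟩ := hne (p a) ⟨a, ha, rfl⟩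
  exact ⟨a', ha'A, ha'p⟩

theorem exists_ne_mem_fibers_of_forall_fiber
    (hne : ∀ y ∈ p '' S, (A ∩ (S ∩ p ⁻¹' {y})).Nonempty)
    (htwo : ∀ y ∈ p '' S, (S ∩ p ⁻¹' {y}).Nontrivial → (A ∩ (S ∩ p ⁻¹' {y})).Nontrivial)
    {a b : X} (ha : a ∈ S) (hb : b ∈ S) (hab : a ≠ b) :
    ∃ a' ∈ A, ∃ b' ∈ A, a' ≠ b' ∧ p a' = p a ∧ p b' = p b := by
  by_cases hp : p a = p b
  · obtain ⟨a', ⟨ha'A, -, ha'p⟩, b', ⟨hb'A, -, hb'p⟩, hab'⟩ :=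
      htwo (p a) ⟨a, ha, rfl⟩ ⟨a, ⟨ha, rfl⟩, b, ⟨hb, hp.symm⟩, hab⟩
    exact ⟨a', ha'A, b', hb'A, hab', ha'p, hb'p.trans hp⟩
  · obtain ⟨a', ha'A, ha'p⟩ := exists_mem_fiber_of_forall_fiber_nonempty hne ha
    obtain ⟨b', hb'A, hb'p⟩ := exists_mem_fiber_of_forall_fiber_nonempty hne hb
    exact ⟨a', ha'A, b', hb'A, fun h => hp (by rw [← ha'p, h, hb'p]), ha'p, hb'p⟩

end Fibers

section Weights

variable {n : ℕ} {ι : Type*} {w : Fin n → ℝ} {p : (Fin n →₀ ℕ) → ι} {S A : Set (Fin n →₀ ℕ)}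

theorem minAttainedTwice_iff_of_forall_fiber
    (hw : ∀ a b, p a = p b → wt w a = wt w b) (hA : A ⊆ S)
    (hne : ∀ y ∈ p '' S, (A ∩ (S ∩ p ⁻¹' {y})).Nonempty)
    (htwo : ∀ y ∈ p '' S, (S ∩ p ⁻¹' {y}).Nontrivial → (A ∩ (S ∩ p ⁻¹' {y})).Nontrivial) :
    MinAttainedTwice w S ↔ MinAttainedTwice w A := by
  have lowerBound_iff (m : ℝ) : (∀ c ∈ S, m ≤ wt w c) ↔ ∀ c ∈ A, m ≤ wt w c := by
    refine ⟨fun h c hc => h c (hA hc), fun h c hc => ?_⟩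
    obtain ⟨c', hc'A, hc'p⟩ := exists_mem_fiber_of_forall_fiber_nonempty hne hc
    exact hw c' c hc'p ▸ h c' hc'A
  constructor
  · rintro ⟨a, ha, b, hb, hab, hwab, hmin⟩
    obtain ⟨a', ha'A, b', hb'A, hab', ha'p, hb'p⟩ :=
      exists_ne_mem_fibers_of_forall_fiber hne htwo ha hb hab
    rw [← hw a' a ha'p, ← hw b' b hb'p] at hwab
    rw [← hw a' a ha'p, lowerBound_iff] at hmin
    exact ⟨a', ha'A, b', hb'A, hab', hwab, hmin⟩
  · rintro ⟨a, ha, b, hb, hab, hwab, hmin⟩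
    exact ⟨a, hA ha, b, hA hb, hab, hwab, (lowerBound_iff _).2 hmin⟩

end Weights

theorem wt_eq_of_proj1_eq {n : ℕ} {w : Fin (n + 2) → ℝ} (hw0 : w 0 = 0)
    {α β : Fin (n + 2) →₀ ℕ} (h : proj1 α = proj1 β) : wt w α = wt w β := by
  refine Finset.sum_congr rfl fun i _ => ?_
  by_cases hi : i = 0
  · simp [hi, hw0]
  · rw [show α i = β i from congrFun h ⟨i, hi⟩]

theorem minAttainedTwice_E1_iff_A_general
    (n : ℕ) (f : MvPowerSeries (Fin (n + 2)) ℂ)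
    (A : Set (Fin (n + 2) →₀ ℕ)) (hA : A ⊆ E1 f)
    (hne : ∀ β ∈ proj1 '' E1 f, (A ∩ fiber1 f β).Nonempty)
    (htwo : ∀ β ∈ proj1 '' E1 f, (fiber1 f β).Nontrivial → (A ∩ fiber1 f β).Nontrivial) :
    ∀ w : Fin (n + 2) → ℝ, w 0 = 0 → (∀ i : Fin (n + 2), i ≠ 0 → 0 < w i) →
      (MinAttainedTwice w (E1 f) ↔ MinAttainedTwice w A) :=
  fun _ hw0 _ =>
    minAttainedTwice_iff_of_forall_fiber (fun _ _ => wt_eq_of_proj1_eq hw0) hA hne htwo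

/-- Let `A ⊆ E₁(f)` meet every fiber of `π` over `π(E₁(f))`, in at least two points whenever
the fiber has at least two points. Then for every `w = (0, w₂, …, wₙ)` with `wᵢ > 0` for
`i ≠ 1`, the minimum of `w·α` over `E₁(f)` is attained at two or more distinct elements of
`E₁(f)` iff the minimum of `w·α` over `A` is attained at two or more distinct elements
of `A`. -/
theorem minAttainedTwice_E1_iff_A
    (n : ℕ) (f : MvPowerSeries (Fin (n + 2)) ℂ) (hf : f ≠ 0)
    (A : Set (Fin (n + 2) →₀ ℕ)) (hA : A ⊆ E1 f)
    (hne : ∀ β ∈ proj1 '' E1 f, (A ∩ fiber1 f β).Nonempty)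
    (htwo : ∀ β ∈ proj1 '' E1 f, (fiber1 f β).Nontrivial → (A ∩ fiber1 f β).Nontrivial) :
    ∀ w : Fin (n + 2) → ℝ, w 0 = 0 → (∀ i : Fin (n + 2), i ≠ 0 → 0 < w i) →
      (MinAttainedTwice w (E1 f) ↔ MinAttainedTwice w A) :=
  minAttainedTwice_E1_iff_A_general n f A hA hne htwo
end

section
/- Let I be an ideal of ℂ[[x₁,…,xₙ]] and let w ∈ ℝⁿ satisfy wᵢ > 0 for all i. If the ideal in_w(I) of the polynomial ring ℂ[x₁,…,xₙ] generated by the initial forms in_w(f) of all nonzero f ∈ I contains a nonzero monomial c·x^α (c ∈ ℂ, c ≠ 0, α ∈ ℕⁿ), then there exists a nonzero f ∈ I such that in_w(f) is a monomial, i.e. the minimum of w·β over β ∈ Supp(f) is attained at exactly one β. -/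
open Classical in
/-- `p` is the initial form `in_w(f)` of the power series `f`: the polynomial whose
coefficient at `β` equals the coefficient of `f` at `β` if `β ∈ Supp f` has minimal
`w`-weight among `Supp f`, and `0` otherwise. -/
def IsInitialForm {n : ℕ} (w : Fin n → ℝ) (f : MvPowerSeries (Fin n) ℂ)
    (p : MvPolynomial (Fin n) ℂ) : Prop :=
  ∀ β : Fin n →₀ ℕ,
    MvPolynomial.coeff β p =
      if β ∈ Supp f ∧ ∀ γ ∈ Supp f, wt w β ≤ wt w γ then MvPowerSeries.coeff β f else 0

/-! Write the monomial `c x^α` as `∑ dᵢ pᵢ`, where `pᵢ` is the initial form of `fᵢ ∈ I` and is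
weighted homogeneous of weight `mᵢ`. Replacing each `dᵢ` by its component `qᵢ` of weight
`w·α - mᵢ` does not change the sum, and `F = ∑ qᵢ fᵢ ∈ I` agrees with `∑ qᵢ pᵢ = c x^α` in
all weights `≤ w·α`, because `fᵢ - pᵢ` only has terms of weight `> mᵢ`. Hence `α` is the unique
exponent of minimal weight in the support of `F`. -/

open MvPolynomial

section WeightedOrder

variable {σ R M : Type*} [CommSemiring R] {w : σ → M}

def EqUpToWeight [AddCommMonoid M] [Preorder M] (w : σ → M) (t : M)
    (f g : MvPowerSeries σ R) : Prop :=
  ∀ γ, Finsupp.weight w γ ≤ t → MvPowerSeries.coeff γ f = MvPowerSeries.coeff γ g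

theorem EqUpToWeight.sum [AddCommMonoid M] [Preorder M] {t : M} {ι : Type*} {s : Finset ι}
    {f g : ι → MvPowerSeries σ R} (h : ∀ i ∈ s, EqUpToWeight w t (f i) (g i)) :
    EqUpToWeight w t (∑ i ∈ s, f i) (∑ i ∈ s, g i) := fun γ hγ => by
  simp only [map_sum]
  exact Finset.sum_congr rfl fun i hi => h i hi γ hγ

theorem EqUpToWeight.mul_left_of_isWeightedHomogeneous [AddCommMonoid M] [PartialOrder M]
    [IsOrderedCancelAddMonoid M] {s m : M} {q : MvPolynomial σ R} {f g : MvPowerSeries σ R}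
    (hq : IsWeightedHomogeneous w q s) (h : EqUpToWeight w m f g) :
    EqUpToWeight w (s + m) ((q : MvPowerSeries σ R) * f) (q * g) := by
  classical
  intro γ hγ
  simp only [MvPowerSeries.coeff_mul, coeff_coe]
  refine Finset.sum_congr rfl fun x hx => ?_
  by_cases hqx : coeff x.1 q = 0
  · simp [hqx]
  · rw [← Finset.HasAntidiagonal.mem_antidiagonal.mp hx, map_add, hq hqx] at hγ
    rw [h x.2 (le_of_add_le_add_left hγ)]

theorem weightedHomogeneousComponent_mul_of_isWeightedHomogeneous [AddCancelCommMonoid M]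
    {m : M} {p : MvPolynomial σ R} (hp : IsWeightedHomogeneous w p m) (s : M)
    (d : MvPolynomial σ R) :
    weightedHomogeneousComponent w (s + m) (d * p) = weightedHomogeneousComponent w s d * p := by
  classical
  ext γ
  simp only [coeff_weightedHomogeneousComponent, coeff_mul, ite_mul, zero_mul]
  have hweight : ∀ x ∈ Finset.HasAntidiagonal.antidiagonal γ, coeff x.2 p ≠ 0 →
      (Finsupp.weight w γ = s + m ↔ Finsupp.weight w x.1 = s) := fun x hx hpx => by
    rw [← Finset.HasAntidiagonal.mem_antidiagonal.mp hx, map_add, hp hpx, add_left_inj]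
  split_ifs with hγ
  · refine Finset.sum_congr rfl fun x hx => ?_
    by_cases hpx : coeff x.2 p = 0
    · simp [hpx]
    · rw [if_pos ((hweight x hx hpx).mp hγ)]
  · refine (Finset.sum_eq_zero fun x hx => ?_).symm
    by_cases hpx : coeff x.2 p = 0
    · simp [hpx]
    · rw [if_neg (mt (hweight x hx hpx).mpr hγ)]

theorem exists_mem_eqUpToWeight_of_mem_span [AddCommGroup M] [PartialOrder M]
    [IsOrderedAddMonoid M] {I : Ideal (MvPowerSeries σ R)} {t : M} {P : MvPolynomial σ R}
    (hP : IsWeightedHomogeneous w P t)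
    (hspan : P ∈ Ideal.span
      {p | ∃ f ∈ I, ∃ m, IsWeightedHomogeneous w p m ∧ EqUpToWeight w m f p}) :
    ∃ F ∈ I, EqUpToWeight w t F P := by
  obtain ⟨k, d, p, rfl⟩ := Submodule.mem_span_set'.mp hspan
  choose f hfI m hpm hfp using fun i => (p i).2
  set q := fun i => weightedHomogeneousComponent w (t - m i) (d i)
  have hsum : ∑ i, d i • (p i : MvPolynomial σ R) = ∑ i, q i * p i := by
    rw [← hP.weightedHomogeneousComponent_same, map_sum]
    refine Finset.sum_congr rfl fun i _ => ?_
    rw [smul_eq_mul, ← sub_add_cancel t (m i),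
      weightedHomogeneousComponent_mul_of_isWeightedHomogeneous (hpm i)]
  refine ⟨∑ i, q i * f i, Ideal.sum_mem _ fun i _ => Ideal.mul_mem_left _ _ (hfI i), ?_⟩
  rw [hsum, ← coeToMvPowerSeries.ringHom_apply, map_sum]
  refine EqUpToWeight.sum fun i _ => ?_
  rw [map_mul, coeToMvPowerSeries.ringHom_apply, coeToMvPowerSeries.ringHom_apply]
  have hi := (hfp i).mul_left_of_isWeightedHomogeneous
    (weightedHomogeneousComponent_isWeightedHomogeneous (t - m i) (d i))
  rwa [sub_add_cancel] at hi

end WeightedOrder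

section InitialForm

variable {n : ℕ} {w : Fin n → ℝ} {f : MvPowerSeries (Fin n) ℂ} {p : MvPolynomial (Fin n) ℂ}

theorem wt_eq_weight (α : Fin n →₀ ℕ) : wt w α = Finsupp.weight w α := by
  simp [wt, Finsupp.weight_apply, Finsupp.sum_fintype, mul_comm]

theorem IsInitialForm.isMin_of_coeff_ne_zero (h : IsInitialForm w f p) {β : Fin n →₀ ℕ}
    (hβ : coeff β p ≠ 0) : β ∈ Supp f ∧ ∀ γ ∈ Supp f, wt w β ≤ wt w γ := by
  rw [h β] at hβ
  by_contra hmin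
  exact hβ (if_neg hmin)

theorem IsInitialForm.isWeightedHomogeneous (h : IsInitialForm w f p) {β : Fin n →₀ ℕ}
    (hβ : coeff β p ≠ 0) : IsWeightedHomogeneous w p (Finsupp.weight w β) := by
  intro γ hγ
  obtain ⟨hγS, hγmin⟩ := h.isMin_of_coeff_ne_zero hγ
  obtain ⟨hβS, hβmin⟩ := h.isMin_of_coeff_ne_zero hβ
  rw [← wt_eq_weight, ← wt_eq_weight]
  exact le_antisymm (hγmin β hβS) (hβmin γ hγS)

theorem IsInitialForm.eqUpToWeight (h : IsInitialForm w f p) {β : Fin n →₀ ℕ}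
    (hβ : coeff β p ≠ 0) : EqUpToWeight w (Finsupp.weight w β) f p := by
  intro γ hγ
  obtain ⟨-, hβmin⟩ := h.isMin_of_coeff_ne_zero hβ
  rw [← wt_eq_weight, ← wt_eq_weight] at hγ
  rw [coeff_coe, h γ]
  split_ifs with hγmin
  · rfl
  · by_contra hγS
    exact hγmin ⟨hγS, fun δ hδ => hγ.trans (hβmin δ hδ)⟩

theorem existsUnique_min_wt_of_eqUpToWeight_monomial {F : MvPowerSeries (Fin n) ℂ}
    {α : Fin n →₀ ℕ} {c : ℂ} (hc : c ≠ 0)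
    (hF : EqUpToWeight w (Finsupp.weight w α) F (monomial α c)) :
    F ≠ 0 ∧ ∃! β, β ∈ Supp F ∧ ∀ γ ∈ Supp F, wt w β ≤ wt w γ := by
  have hlow : ∀ γ ∈ Supp F, wt w γ ≤ wt w α → γ = α := by
    intro γ hγ hle
    rw [wt_eq_weight, wt_eq_weight] at hle
    by_contra hne
    exact hγ (by rw [hF γ hle, coeff_coe, coeff_monomial, if_neg (Ne.symm hne)])
  have hα : α ∈ Supp F := by
    change MvPowerSeries.coeff α F ≠ 0
    rwa [hF α le_rfl, coeff_coe, coeff_monomial, if_pos rfl]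
  refine ⟨fun h0 => hα (by rw [h0, map_zero]), α, ⟨hα, fun γ hγ => ?_⟩,
    fun β hβ => hlow β hβ.1 (hβ.2 α hα)⟩
  by_contra hlt
  obtain rfl := hlow γ hγ (le_of_not_ge hlt)
  exact hlt le_rfl

end InitialForm

theorem exists_monomial_initial_form_of_initial_ideal_contains_monomial_general
    (n : ℕ) (I : Ideal (MvPowerSeries (Fin n) ℂ))
    (w : Fin n → ℝ)
    (c : ℂ) (hc : c ≠ 0) (α : Fin n →₀ ℕ)
    (hmem : MvPolynomial.monomial α c ∈
      Ideal.span {p : MvPolynomial (Fin n) ℂ | ∃ f ∈ I, f ≠ 0 ∧ IsInitialForm w f p}) :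
    ∃ f ∈ I, f ≠ 0 ∧
      ∃! β : Fin n →₀ ℕ, β ∈ Supp f ∧ ∀ γ ∈ Supp f, wt w β ≤ wt w γ := by
  have hspan : monomial α c ∈ Ideal.span
      {p | ∃ f ∈ I, ∃ m, IsWeightedHomogeneous w p m ∧ EqUpToWeight w m f p} := by
    refine Ideal.span_le.mpr ?_ hmem
    rintro p ⟨f, hfI, -, hfp⟩
    obtain rfl | hp := eq_or_ne p 0
    · exact zero_mem _
    obtain ⟨β, hβ⟩ := ne_zero_iff.mp hp
    exact Ideal.subset_span ⟨f, hfI, _, hfp.isWeightedHomogeneous hβ, hfp.eqUpToWeight hβ⟩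
  obtain ⟨F, hFI, hF⟩ :=
    exists_mem_eqUpToWeight_of_mem_span (isWeightedHomogeneous_monomial w α c rfl) hspan
  exact ⟨F, hFI, existsUnique_min_wt_of_eqUpToWeight_monomial hc hF⟩

/-- Let `I` be an ideal of `ℂ[[x₁,…,xₙ]]` and `w` strictly positive. If the ideal `in_w(I)`
of `ℂ[x₁,…,xₙ]` generated by the initial forms of all nonzero elements of `I` contains a
nonzero monomial, then there is a nonzero `f ∈ I` whose initial form is a monomial, i.e.
the minimum of `w·β` over `β ∈ Supp f` is attained at exactly one `β`. -/
theorem exists_monomial_initial_form_of_initial_ideal_contains_monomial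
    (n : ℕ) (hn : 1 ≤ n) (I : Ideal (MvPowerSeries (Fin n) ℂ))
    (w : Fin n → ℝ) (hw : ∀ i, 0 < w i)
    (c : ℂ) (hc : c ≠ 0) (α : Fin n →₀ ℕ)
    (hmem : MvPolynomial.monomial α c ∈
      Ideal.span {p : MvPolynomial (Fin n) ℂ | ∃ f ∈ I, f ≠ 0 ∧ IsInitialForm w f p}) :
    ∃ f ∈ I, f ≠ 0 ∧
      ∃! β : Fin n →₀ ℕ, β ∈ Supp f ∧ ∀ γ ∈ Supp f, wt w β ≤ wt w γ :=
  exists_monomial_initial_form_of_initial_ideal_contains_monomial_general n I w c hc α hmem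
end
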